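/- Discrete duality identity for the symmetric Nitsche method: let γ > 0, N ≥ 1, T > 0, v ∈ C([0,T]), and let t ↦ u(·,t) and t ↦ y(·,t) be C² (in time) curves of real polynomials in x of degree at most N vanishing at x = −1 such that, for every polynomial ψ of degree at most N with ψ(−1) = 0 and every t ∈ [0,T]: (i) ∫_{-1}^{1} u_tt ψ dx + ∫_{-1}^{1} u_x ψ' dx − u_x(1,t)ψ(1) − u(1,t)ψ'(1) + γN²u(1,t)ψ(1) = 0; (ii) ∫_{-1}^{1} y_tt ψ dx + ∫_{-1}^{1} y_x ψ' dx − y_x(1,t)ψ(1) − y(1,t)ψ'(1) + γN²y(1,t)ψ(1) = v(t)·(−ψ'(1) + γN²ψ(1)); and (iii) y(·,T) = 0 and y_t(·,T) = 0. Then ∫_0^T v(t)·(−u_x(1,t) + γN²u(1,t)) dt = ∫_{-1}^{1} ( u_t(x,0)·y(x,0) − u(x,0)·y_t(x,0) ) dx. -/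

import Mathlib

open Polynomial MeasureTheory Set

/-!
Put `W(t) = ∫ (u y_t - u_t y) dx`. Testing (i) with `y(·,t)` and (ii) with `u(·,t)` and
subtracting, the symmetric Nitsche bilinear form cancels and
`W'(t) = ∫ (u y_tt - u_tt y) dx = v(t)(-u_x(1,t) + γN²u(1,t))`.
Integrating over `[0,T]` and using `W(T) = 0` gives the identity. Differentiating under the
integral is harmless because every time slice is a polynomial of degree `≤ N`: in a Lagrange
basis, `∫ f g dx` becomes a finite sum of products of nodal values.
-/

def HasNodalExpansion {X ι : Type*} [Fintype ι] (w : ι → X) (L : ι → X → ℝ) (g : X → ℝ) : Prop :=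
  ∀ x, g x = ∑ i, g (w i) * L i x

theorem hasNodalExpansion_eval {ι : Type*} [Fintype ι] [DecidableEq ι] {w : ι → ℝ}
    (hw : Function.Injective w) {p : ℝ[X]} (hp : p.degree < Fintype.card ι) :
    HasNodalExpansion w (fun i x => (Lagrange.basis Finset.univ w i).eval x) p.eval := by
  intro x
  conv_lhs => rw [Lagrange.eq_interpolate hw.injOn hp]
  simp [Lagrange.interpolate_apply, eval_finsetSum]

theorem hasNodalExpansion_eval_of_degree_le {N : ℕ} {p : ℝ[X]} (hp : p.degree ≤ N)
    {g : ℝ → ℝ} (hg : ∀ x, g x = p.eval x) :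
    HasNodalExpansion (fun i : Fin (N + 1) => ((i : ℕ) : ℝ))
      (fun i x => (Lagrange.basis Finset.univ (fun i : Fin (N + 1) => ((i : ℕ) : ℝ)) i).eval x)
      g := by
  obtain rfl : g = p.eval := funext hg
  refine hasNodalExpansion_eval (fun i j hij => Fin.ext (Nat.cast_injective hij)) ?_
  exact hp.trans_lt (by rw [Fintype.card_fin]; exact_mod_cast N.lt_succ_self)

namespace HasNodalExpansion

variable {ι : Type*} [Fintype ι] {w : ι → ℝ} {L : ι → ℝ → ℝ}

theorem continuous (hL : ∀ i, Continuous (L i)) {g : ℝ → ℝ} (hg : HasNodalExpansion w L g) :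
    Continuous g :=
  (continuous_finsetSum _ fun i _ => continuous_const.mul (hL i)).congr fun x => (hg x).symm

theorem hasDerivAt {L' : ι → ℝ} {x : ℝ} (hL : ∀ i, HasDerivAt (L i) (L' i) x) {g : ℝ → ℝ}
    (hg : HasNodalExpansion w L g) : HasDerivAt g (∑ i, g (w i) * L' i) x :=
  (HasDerivAt.fun_sum fun i _ => (hL i).const_mul (g (w i))).congr_of_eventuallyEq
    (Filter.Eventually.of_forall hg)

theorem integral_mul (hL : ∀ i, Continuous (L i)) {g h : ℝ → ℝ} (hg : HasNodalExpansion w L g)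
    (hh : HasNodalExpansion w L h) (a b : ℝ) :
    ∫ x in a..b, g x * h x = ∑ i, ∑ j, g (w i) * h (w j) * ∫ x in a..b, L i x * L j x := by
  have hcont : ∀ i j, Continuous fun x => g (w i) * L i x * (h (w j) * L j x) :=
    fun i j => (continuous_const.mul (hL i)).mul (continuous_const.mul (hL j))
  rw [intervalIntegral.integral_congr fun x _ => by rw [hg x, hh x, Finset.sum_mul_sum],
    intervalIntegral.integral_finsetSum fun i _ =>
      (continuous_finsetSum _ fun j _ => hcont i j).intervalIntegrable _ _]
  refine Finset.sum_congr rfl fun i _ => ?_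
  rw [intervalIntegral.integral_finsetSum fun j _ => (hcont i j).intervalIntegrable _ _]
  refine Finset.sum_congr rfl fun j _ => ?_
  rw [← intervalIntegral.integral_const_mul]
  exact intervalIntegral.integral_congr fun x _ => by ring

end HasNodalExpansion

section TimeDependent

variable {ι : Type*} [Fintype ι] {w : ι → ℝ} {L : ι → ℝ → ℝ} {s : Set ℝ} {t : ℝ}

theorem hasNodalExpansion_of_hasDerivWithinAt {f f' : ℝ → ℝ → ℝ}
    (hf : ∀ τ ∈ s, HasNodalExpansion w L (f · τ)) (hf' : ∀ x, HasDerivWithinAt (f x) (f' x t) s t)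
    (hs : UniqueDiffWithinAt ℝ s t) (ht : t ∈ s) : HasNodalExpansion w L (f' · t) := by
  intro x
  have hsum : HasDerivWithinAt (f x) (∑ i, f' (w i) t * L i x) s t :=
    (HasDerivWithinAt.fun_sum fun i _ => (hf' (w i)).mul_const (L i x)).congr
      (fun τ hτ => hf τ hτ x) (hf t ht x)
  exact hs.eq_deriv _ (hf' x) hsum

theorem continuousOn_deriv_of_hasNodalExpansion {L' : ι → ℝ} {x : ℝ}
    (hL : ∀ i, HasDerivAt (L i) (L' i) x) {f : ℝ → ℝ → ℝ}
    (hf : ∀ τ ∈ s, HasNodalExpansion w L (f · τ)) (hc : ∀ i, ContinuousOn (f (w i)) s) :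
    ContinuousOn (fun τ => deriv (f · τ) x) s :=
  (continuousOn_finsetSum _ fun i _ => (hc i).mul continuousOn_const).congr fun τ hτ =>
    ((hf τ hτ).hasDerivAt hL).deriv

theorem hasDerivWithinAt_integral_mul_of_hasNodalExpansion (hL : ∀ i, Continuous (L i))
    {f f' g g' : ℝ → ℝ → ℝ} (hf : ∀ τ ∈ s, HasNodalExpansion w L (f · τ))
    (hg : ∀ τ ∈ s, HasNodalExpansion w L (g · τ)) (hf' : ∀ x, HasDerivWithinAt (f x) (f' x t) s t)
    (hg' : ∀ x, HasDerivWithinAt (g x) (g' x t) s t) (hs : UniqueDiffWithinAt ℝ s t) (ht : t ∈ s)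
    (a b : ℝ) :
    HasDerivWithinAt (fun τ => ∫ x in a..b, f x τ * g x τ)
      ((∫ x in a..b, f' x t * g x t) + ∫ x in a..b, f x t * g' x t) s t := by
  rw [(hasNodalExpansion_of_hasDerivWithinAt hf hf' hs ht).integral_mul hL (hg t ht),
    (hf t ht).integral_mul hL (hasNodalExpansion_of_hasDerivWithinAt hg hg' hs ht),
    ← Finset.sum_add_distrib]
  refine HasDerivWithinAt.congr ?_ (fun τ hτ => (hf τ hτ).integral_mul hL (hg τ hτ) a b)
    ((hf t ht).integral_mul hL (hg t ht) a b)
  refine HasDerivWithinAt.fun_sum fun i _ => ?_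
  rw [← Finset.sum_add_distrib]
  exact HasDerivWithinAt.fun_sum fun j _ =>
    (((hf' (w i)).mul (hg' (w j))).mul_const _).congr_deriv (by ring)

/-- The cross terms `∫ f' g'` cancel. -/
theorem hasDerivWithinAt_integral_wronskian (hL : ∀ i, Continuous (L i))
    {f f' f'' g g' g'' : ℝ → ℝ → ℝ} (hf : ∀ τ ∈ s, HasNodalExpansion w L (f · τ))
    (hg : ∀ τ ∈ s, HasNodalExpansion w L (g · τ))
    (hf' : ∀ x, ∀ τ ∈ s, HasDerivWithinAt (f x) (f' x τ) s τ)
    (hf'' : ∀ x, ∀ τ ∈ s, HasDerivWithinAt (f' x) (f'' x τ) s τ)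
    (hg' : ∀ x, ∀ τ ∈ s, HasDerivWithinAt (g x) (g' x τ) s τ)
    (hg'' : ∀ x, ∀ τ ∈ s, HasDerivWithinAt (g' x) (g'' x τ) s τ) (hs : UniqueDiffOn ℝ s)
    (ht : t ∈ s) (a b : ℝ) :
    HasDerivWithinAt (fun τ => (∫ x in a..b, f x τ * g' x τ) - ∫ x in a..b, f' x τ * g x τ)
      ((∫ x in a..b, f x t * g'' x t) - ∫ x in a..b, f'' x t * g x t) s t := by
  have hfd := fun τ hτ => hasNodalExpansion_of_hasDerivWithinAt hf (hf' · τ hτ) (hs τ hτ) hτ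
  have hgd := fun τ hτ => hasNodalExpansion_of_hasDerivWithinAt hg (hg' · τ hτ) (hs τ hτ) hτ
  refine ((hasDerivWithinAt_integral_mul_of_hasNodalExpansion hL hf hgd (hf' · t ht)
    (hg'' · t ht) (hs t ht) ht a b).sub
    (hasDerivWithinAt_integral_mul_of_hasNodalExpansion hL hfd hg (hf'' · t ht)
      (hg' · t ht) (hs t ht) ht a b)).congr_deriv ?_
  ring

end TimeDependent

theorem integral_eq_sub_of_forall_hasDerivWithinAt_Icc {E : Type*} [NormedAddCommGroup E]
    [NormedSpace ℝ E] [CompleteSpace E] {f f' : ℝ → E} {a b : ℝ} (hab : a ≤ b)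
    (hf : ∀ t ∈ Icc a b, HasDerivWithinAt f (f' t) (Icc a b) t) (hf' : ContinuousOn f' (Icc a b)) :
    ∫ t in a..b, f' t = f b - f a :=
  intervalIntegral.integral_eq_sub_of_hasDerivAt_of_le hab
    (fun t ht => (hf t ht).continuousWithinAt)
    (fun t ht => (hf t (Ioo_subset_Icc_self ht)).hasDerivAt (Icc_mem_nhds ht.1 ht.2))
    (hf'.intervalIntegrable_of_Icc hab)

/-- The symmetric Nitsche bilinear form cancels; only the boundary datum survives. -/
theorem integral_mul_sub_integral_mul_eq_of_nitsche {κ c : ℝ} {u y utt ytt : ℝ → ℝ} {p q : ℝ[X]}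
    (hu : ∀ x, u x = p.eval x) (hy : ∀ x, y x = q.eval x)
    (hweaku : (∫ x in (-1 : ℝ)..1, utt x * q.eval x)
      + (∫ x in (-1 : ℝ)..1, deriv u x * q.derivative.eval x)
      - deriv u 1 * q.eval 1 - u 1 * q.derivative.eval 1 + κ * u 1 * q.eval 1 = 0)
    (hweaky : (∫ x in (-1 : ℝ)..1, ytt x * p.eval x)
      + (∫ x in (-1 : ℝ)..1, deriv y x * p.derivative.eval x)
      - deriv y 1 * p.eval 1 - y 1 * p.derivative.eval 1 + κ * y 1 * p.eval 1
      = c * (-p.derivative.eval 1 + κ * p.eval 1)) :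
    (∫ x in (-1 : ℝ)..1, u x * ytt x) - (∫ x in (-1 : ℝ)..1, utt x * y x)
      = c * (-deriv u 1 + κ * u 1) := by
  simp only [funext hu, funext hy, Polynomial.deriv] at hweaku hweaky ⊢
  have hcomm : ∫ x in (-1 : ℝ)..1, p.eval x * ytt x = ∫ x in (-1 : ℝ)..1, ytt x * p.eval x :=
    intervalIntegral.integral_congr fun x _ => mul_comm _ _
  have hsymm : ∫ x in (-1 : ℝ)..1, q.derivative.eval x * p.derivative.eval x
      = ∫ x in (-1 : ℝ)..1, p.derivative.eval x * q.derivative.eval x :=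
    intervalIntegral.integral_congr fun x _ => mul_comm _ _
  rw [hcomm]
  rw [hsymm] at hweaky
  linarith

theorem nitsche_discrete_duality
    (γ : ℝ) (N : ℕ) (T : ℝ) (hT : 0 < T)
    (v : ℝ → ℝ) (hv : ContinuousOn v (Set.Icc 0 T))
    (u ut utt y yt ytt : ℝ → ℝ → ℝ)
    -- for each t, u(·,t) and y(·,t) are polynomials of degree ≤ N vanishing at x = −1
    (hupoly : ∀ t ∈ Set.Icc (0 : ℝ) T,
      ∃ p : Polynomial ℝ, p.degree ≤ N ∧ p.eval (-1) = 0 ∧ ∀ x : ℝ, u x t = p.eval x)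
    (hypoly : ∀ t ∈ Set.Icc (0 : ℝ) T,
      ∃ p : Polynomial ℝ, p.degree ≤ N ∧ p.eval (-1) = 0 ∧ ∀ x : ℝ, y x t = p.eval x)
    -- ut, utt, yt, ytt are the time derivatives of u and y on [0,T] (C² in time)
    (hut : ∀ x : ℝ, ∀ t ∈ Set.Icc (0 : ℝ) T,
      HasDerivWithinAt (fun τ => u x τ) (ut x t) (Set.Icc (0 : ℝ) T) t)
    (hutt : ∀ x : ℝ, ∀ t ∈ Set.Icc (0 : ℝ) T,
      HasDerivWithinAt (fun τ => ut x τ) (utt x t) (Set.Icc (0 : ℝ) T) t)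
    (hyt : ∀ x : ℝ, ∀ t ∈ Set.Icc (0 : ℝ) T,
      HasDerivWithinAt (fun τ => y x τ) (yt x t) (Set.Icc (0 : ℝ) T) t)
    (hytt : ∀ x : ℝ, ∀ t ∈ Set.Icc (0 : ℝ) T,
      HasDerivWithinAt (fun τ => yt x τ) (ytt x t) (Set.Icc (0 : ℝ) T) t)
    -- (i) the symmetric Nitsche semi-discretization of the homogeneous wave equation
    (hweaku : ∀ ψ : Polynomial ℝ, ψ.degree ≤ N → ψ.eval (-1) = 0 →
      ∀ t ∈ Set.Icc (0 : ℝ) T,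
      (∫ x in (-1 : ℝ)..1, utt x t * ψ.eval x)
        + (∫ x in (-1 : ℝ)..1, deriv (fun ξ => u ξ t) x * ψ.derivative.eval x)
        - deriv (fun ξ => u ξ t) 1 * ψ.eval 1
        - u 1 t * ψ.derivative.eval 1
        + γ * (N : ℝ) ^ 2 * u 1 t * ψ.eval 1 = 0)
    -- (ii) the symmetric Nitsche semi-discretization with Dirichlet datum v at x = 1
    (hweaky : ∀ ψ : Polynomial ℝ, ψ.degree ≤ N → ψ.eval (-1) = 0 →
      ∀ t ∈ Set.Icc (0 : ℝ) T,
      (∫ x in (-1 : ℝ)..1, ytt x t * ψ.eval x)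
        + (∫ x in (-1 : ℝ)..1, deriv (fun ξ => y ξ t) x * ψ.derivative.eval x)
        - deriv (fun ξ => y ξ t) 1 * ψ.eval 1
        - y 1 t * ψ.derivative.eval 1
        + γ * (N : ℝ) ^ 2 * y 1 t * ψ.eval 1
        = v t * (-ψ.derivative.eval 1 + γ * (N : ℝ) ^ 2 * ψ.eval 1))
    -- (iii) final conditions for y
    (hyfinal : ∀ x : ℝ, y x T = 0 ∧ yt x T = 0) :
    (∫ t in (0 : ℝ)..T, v t * (-(deriv (fun ξ => u ξ t) 1) + γ * (N : ℝ) ^ 2 * u 1 t))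
      = ∫ x in (-1 : ℝ)..1, (ut x 0 * y x 0 - u x 0 * yt x 0) := by
  set L := fun (i : Fin (N + 1)) x =>
    (Lagrange.basis Finset.univ (fun i : Fin (N + 1) => ((i : ℕ) : ℝ)) i).eval x
  have hL : ∀ i, Continuous (L i) := fun i => Polynomial.continuous _
  have hs : UniqueDiffOn ℝ (Icc 0 T) := uniqueDiffOn_Icc hT
  have hu := fun t ht => let ⟨_, hp, _, hpu⟩ := hupoly t ht
    hasNodalExpansion_eval_of_degree_le hp (g := (u · t)) hpu
  have hy := fun t ht => let ⟨_, hp, _, hpy⟩ := hypoly t ht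
    hasNodalExpansion_eval_of_degree_le hp (g := (y · t)) hpy
  have hW : ∀ t ∈ Icc (0 : ℝ) T, HasDerivWithinAt
      (fun τ => (∫ x in (-1 : ℝ)..1, u x τ * yt x τ) - ∫ x in (-1 : ℝ)..1, ut x τ * y x τ)
      (v t * (-(deriv (fun ξ => u ξ t) 1) + γ * (N : ℝ) ^ 2 * u 1 t)) (Icc 0 T) t := by
    intro t ht
    obtain ⟨p, hp, hp1, hpu⟩ := hupoly t ht
    obtain ⟨q, hq, hq1, hqy⟩ := hypoly t ht
    exact (hasDerivWithinAt_integral_wronskian hL hu hy hut hutt hyt hytt hs ht (-1) 1).congr_deriv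
      (integral_mul_sub_integral_mul_eq_of_nitsche hpu hqy (hweaku q hq hq1 t ht)
        (hweaky p hp hp1 t ht))
  have hbdry : ContinuousOn
      (fun t => v t * (-(deriv (fun ξ => u ξ t) 1) + γ * (N : ℝ) ^ 2 * u 1 t)) (Icc 0 T) :=
    hv.mul ((continuousOn_deriv_of_hasNodalExpansion (fun i => Polynomial.hasDerivAt _ 1) hu
      fun x t ht => (hut x t ht).continuousWithinAt).neg.add
      (continuousOn_const.mul fun t ht => (hut 1 t ht).continuousWithinAt))
  have h0 : (0 : ℝ) ∈ Icc 0 T := left_mem_Icc.2 hT.le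
  have hut0 := hasNodalExpansion_of_hasDerivWithinAt hu (hut · 0 h0) (hs 0 h0) h0
  have hyt0 := hasNodalExpansion_of_hasDerivWithinAt hy (hyt · 0 h0) (hs 0 h0) h0
  rw [integral_eq_sub_of_forall_hasDerivWithinAt_Icc hT.le hW hbdry,
    intervalIntegral.integral_sub (f := fun x => ut x 0 * y x 0) (g := fun x => u x 0 * yt x 0)
      (((hut0.continuous hL).mul ((hy 0 h0).continuous hL)).intervalIntegrable _ _)
      ((((hu 0 h0).continuous hL).mul (hyt0.continuous hL)).intervalIntegrable _ _)]
  simp [hyfinal]
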